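/- Let q be real with 0 < q < 1, let r, m be integers with 1 < m ≤ r, and let θ : (ℂ∖{0})^r → ℂ be a multiple theta function θ(a) = ∏_{i=1}^m [(−1)^{δ_i} a^{γ_i} q^{z_i}; q^{t_i}]_∞ with δ_i ∈ {0,1}, exponent vectors γ_1, …, γ_m ∈ ℤ^r linearly independent over ℚ, z_i ∈ ℚ and t_i ∈ ℚ_{>0}. Let U_θ ⊆ ℚ^r be the ℚ-linear span of {γ_1, …, γ_m}, and let V_θ ⊆ ℚ^r be the ℚ-linear span of the set of all w ∈ ℤ^r for which there exist α ∈ ℤ^r, ρ ∈ {0,1} and s ∈ ℚ such that θ(a_1 q^{α_1}, …, a_r q^{α_r}) = (−1)^ρ · a^{−w} · q^{−s} · θ(a) for all a ∈ (ℂ∖{0})^r. Then U_θ = V_θ. -/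

import Mathlib

/-- The q-Pochhammer symbol of infinite order: `(x; Q)_∞ = ∏_{k=0}^∞ (1 - x Q^k)`. -/
noncomputable def qPoch (x Q : ℂ) : ℂ := ∏' k : ℕ, (1 - x * Q ^ k)

/-- The theta function `[x; Q]_∞ = (x;Q)_∞ (Q/x;Q)_∞`. -/
noncomputable def theta (x Q : ℂ) : ℂ := qPoch x Q * qPoch (Q / x) Q

/-- The multiple theta function
`θ(a) = ∏_{i=1}^m [(-1)^{δ_i} a^{γ_i} q^{z_i}; q^{t_i}]_∞`. -/
noncomputable def mtheta (q : ℝ) {r m : ℕ} (δ : Fin m → ℕ) (γ : Fin m → Fin r → ℤ)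
    (z t : Fin m → ℚ) (a : Fin r → ℂ) : ℂ :=
  ∏ i, theta ((-1 : ℂ) ^ (δ i) * (∏ j, a j ^ (γ i j)) * ((q ^ ((z i : ℝ)) : ℝ) : ℂ))
    ((q ^ ((t i : ℝ)) : ℝ) : ℂ)

/-!
Shifting `a` by `q ^ α` multiplies the argument of the `i`-th factor by `q ^ ⟪α, γ i⟫`. By linear
independence one can choose `α ∈ ℤ^r` with `⟪α, γ i⟫ = 0` for `i ≠ k` and `⟪α, γ k⟫ = n t_k`,
`n > 0`; then only the `k`-th factor moves, by `n` steps of the quasi-periodicity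
`[Q x; Q]_∞ = -x⁻¹ [x; Q]_∞`, which yields a contiguous relation with exponent `n γ_k`. So `U ⊆ V`.

Conversely, if `w ∉ U` there is `β ∈ ℤ^r` orthogonal to every `γ i` with `⟪β, w⟫ ≠ 0`.
Replacing `a` by `a · 2 ^ β` leaves `θ` and the left side of the relation unchanged but multiplies
the right side by `2 ^ (-⟪β, w⟫)`. This is absurd at a point where `θ` does not vanish, e.g. one
where every factor has a negative real argument.
-/

open Complex

lemma summable_norm_mul_pow (x : ℂ) {Q : ℂ} (hQ : ‖Q‖ < 1) :
    Summable fun k : ℕ => ‖x * Q ^ k‖ := by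
  simpa [norm_mul, norm_pow] using (summable_geometric_of_lt_one (norm_nonneg Q) hQ).mul_left ‖x‖

section Theta

variable {x Q : ℂ}

lemma multipliable_one_sub_mul_pow (hQ : ‖Q‖ < 1) :
    Multipliable fun k : ℕ => 1 - x * Q ^ k := by
  simpa [sub_eq_add_neg] using multipliable_one_add_of_summable (f := fun k : ℕ => -(x * Q ^ k))
    (by simpa using summable_norm_mul_pow x hQ)

lemma qPoch_ne_zero (hQ : ‖Q‖ < 1) (hx : ∀ k, x * Q ^ k ≠ 1) : qPoch x Q ≠ 0 := by
  simpa [qPoch, sub_eq_add_neg] using tprod_one_add_ne_zero_of_summable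
    (f := fun k : ℕ => -(x * Q ^ k))
    (fun k => by rw [← sub_eq_add_neg]; exact sub_ne_zero.mpr (hx k).symm)
    (by simpa using summable_norm_mul_pow x hQ)

lemma qPoch_eq_one_sub_mul (hQ : ‖Q‖ < 1) : qPoch x Q = (1 - x) * qPoch (x * Q) Q := by
  have h : Multipliable fun k : ℕ => 1 - x * Q ^ (k + 1) := by
    refine (multipliable_one_sub_mul_pow (x := x * Q) hQ).congr fun k => ?_
    rw [pow_succ', mul_assoc]
  rw [qPoch, qPoch, tprod_eq_zero_mul' (f := fun k => 1 - x * Q ^ k) h, pow_zero, mul_one]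
  congr 1
  exact tprod_congr fun k => by rw [pow_succ', mul_assoc, mul_comm Q]

lemma theta_mul_left (hQ : ‖Q‖ < 1) (hQ0 : Q ≠ 0) (hx : x ≠ 0) :
    theta (Q * x) Q = -x⁻¹ * theta x Q := by
  have hdiv : Q / (Q * x) = x⁻¹ := by field_simp
  rw [theta, theta, hdiv, qPoch_eq_one_sub_mul hQ (x := x⁻¹), qPoch_eq_one_sub_mul hQ (x := x),
    div_eq_inv_mul, mul_comm Q x]
  field_simp
  ring

lemma theta_pow_mul (hQ : ‖Q‖ < 1) (hQ0 : Q ≠ 0) (hx : x ≠ 0) (n : ℕ) :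
    theta (Q ^ n * x) Q = (-x⁻¹) ^ n * Q⁻¹ ^ n.choose 2 * theta x Q := by
  induction n with
  | zero => simp
  | succ n ih =>
    rw [pow_succ', mul_assoc, theta_mul_left hQ hQ0 (by simp [hQ0, hx]), ih,
      Nat.choose_succ_succ', Nat.choose_one_right]
    ring

lemma theta_neg_ofReal_ne_zero {c Q : ℝ} (hc : 0 < c) (hQ0 : 0 ≤ Q) (hQ1 : Q < 1) :
    theta (-c) Q ≠ 0 := by
  have hQ : ‖(Q : ℂ)‖ < 1 := by rwa [Complex.norm_real, Real.norm_of_nonneg hQ0]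
  refine mul_ne_zero (qPoch_ne_zero hQ fun k => ?_) (qPoch_ne_zero hQ fun k => ?_)
  · have : 0 ≤ c * Q ^ k := by positivity
    exact_mod_cast (show -c * Q ^ k ≠ 1 by linarith)
  · have : 0 ≤ Q / c * Q ^ k := by positivity
    rw [div_neg]
    exact_mod_cast (show -(Q / c) * Q ^ k ≠ 1 by linarith)

end Theta

section RationalVectors

variable {σ : Type*} [Fintype σ]

lemma exists_intCast_eq_nat_mul (u : σ → ℚ) :
    ∃ n : ℕ, 0 < n ∧ ∃ β : σ → ℤ, ∀ j, (β j : ℚ) = n * u j := by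
  classical
  refine ⟨∏ j, (u j).den, Finset.prod_pos fun j _ => (u j).pos,
    fun j => (∏ i ∈ Finset.univ.erase j, (u i).den : ℕ) * (u j).num, fun j => ?_⟩
  rw [← Finset.mul_prod_erase _ _ (Finset.mem_univ j)]
  push_cast
  rw [← Rat.den_mul_eq_num]
  ring

lemma intCast_dotProduct_of_eq_nat_mul {n : ℕ} {u : σ → ℚ} {β : σ → ℤ}
    (hβ : ∀ j, (β j : ℚ) = n * u j) (v : σ → ℤ) :
    ((β ⬝ᵥ v : ℤ) : ℚ) = n * (u ⬝ᵥ fun j => (v j : ℚ)) := by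
  push_cast [dotProduct, hβ, Finset.mul_sum]
  exact Finset.sum_congr rfl fun j _ => by ring

lemma exists_dotProduct_eq_one_of_notMem_span {S : Set (σ → ℚ)} {x : σ → ℚ}
    (hx : x ∉ Submodule.span ℚ S) : ∃ u : σ → ℚ, (∀ y ∈ S, u ⬝ᵥ y = 0) ∧ u ⬝ᵥ x = 1 := by
  classical
  obtain ⟨f, hfx, hf⟩ := Submodule.exists_dual_map_eq_bot_of_notMem hx inferInstance
  have hrepr : ∀ y, (dotProductEquiv ℚ σ).symm f ⬝ᵥ y = f y := fun y =>
    LinearMap.congr_fun ((dotProductEquiv ℚ σ).apply_symm_apply f) y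
  refine ⟨(f x)⁻¹ • (dotProductEquiv ℚ σ).symm f, fun y hy => ?_, ?_⟩
  · have : f y = 0 := LinearMap.le_ker_iff_map.mpr hf (Submodule.subset_span hy)
    rw [smul_dotProduct, hrepr, this, smul_zero]
  · rw [smul_dotProduct, hrepr, smul_eq_mul, inv_mul_cancel₀ hfx]

lemma LinearIndependent.exists_dotProduct_eq {ι : Type*} [Fintype ι] {v : ι → σ → ℚ}
    (hv : LinearIndependent ℚ v) (c : ι → ℚ) : ∃ u : σ → ℚ, ∀ i, v i ⬝ᵥ u = c i := by
  classical
  have hdual : ∀ k, ∃ u : σ → ℚ, ∀ i, u ⬝ᵥ v i = if i = k then 1 else 0 := fun k => by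
    obtain ⟨u, hu, huk⟩ := exists_dotProduct_eq_one_of_notMem_span
      (hv.notMem_span_image (s := {k}ᶜ) (x := k) (by simp))
    exact ⟨u, fun i => by
      split_ifs with hik
      · rwa [hik]
      · exact hu _ ⟨i, hik, rfl⟩⟩
  choose u hu using hdual
  refine ⟨∑ k, c k • u k, fun i => ?_⟩
  simp [dotProduct_comm (v i), sum_dotProduct, smul_dotProduct, hu]

lemma exists_intVec_orthogonal_of_notMem_span {ι : Type*} {γ : ι → σ → ℤ} {w : σ → ℤ}
    (hw : (fun j => (w j : ℚ)) ∉ Submodule.span ℚ (Set.range fun i j => (γ i j : ℚ))) :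
    ∃ β : σ → ℤ, (∀ i, β ⬝ᵥ γ i = 0) ∧ β ⬝ᵥ w ≠ 0 := by
  obtain ⟨u, hu, huw⟩ := exists_dotProduct_eq_one_of_notMem_span hw
  obtain ⟨n, hn, β, hβ⟩ := exists_intCast_eq_nat_mul u
  refine ⟨β, fun i => ?_, fun h => ?_⟩
  · have := intCast_dotProduct_of_eq_nat_mul hβ (γ i)
    rw [hu _ ⟨i, rfl⟩, mul_zero] at this
    exact_mod_cast this
  · have := intCast_dotProduct_of_eq_nat_mul hβ w
    rw [h, huw, Int.cast_zero, mul_one] at this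
    exact hn.ne' (by exact_mod_cast this.symm)

end RationalVectors

lemma zpow_sum₀ {ι G₀ : Type*} [CommGroupWithZero G₀] {c : G₀} (hc : c ≠ 0) (s : Finset ι)
    (f : ι → ℤ) : c ^ (∑ i ∈ s, f i) = ∏ i ∈ s, c ^ f i := by
  induction s using Finset.cons_induction with
  | empty => simp
  | cons i s hi ih => rw [Finset.sum_cons, Finset.prod_cons, zpow_add₀ hc, ih]

lemma prod_mul_zpow_zpow {σ G₀ : Type*} [Fintype σ] [CommGroupWithZero G₀] (a : σ → G₀)
    {c : G₀} (hc : c ≠ 0) (α g : σ → ℤ) :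
    ∏ j, (a j * c ^ α j) ^ g j = (∏ j, a j ^ g j) * c ^ (α ⬝ᵥ g) := by
  simp only [mul_zpow, Finset.prod_mul_distrib, ← zpow_mul, dotProduct, zpow_sum₀ hc]

section MultipleTheta

variable (q : ℝ) {r m : ℕ} (δ : Fin m → ℕ) (γ : Fin m → Fin r → ℤ) (z t : Fin m → ℚ)

noncomputable def mthetaArg (a : Fin r → ℂ) (i : Fin m) : ℂ :=
  (-1) ^ δ i * (∏ j, a j ^ γ i j) * ((q ^ (z i : ℝ) : ℝ) : ℂ)

lemma mtheta_eq_prod_theta (a : Fin r → ℂ) :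
    mtheta q δ γ z t a = ∏ i, theta (mthetaArg q δ γ z a i) ((q ^ (t i : ℝ) : ℝ) : ℂ) := rfl

def HasContiguousRelation (w : Fin r → ℤ) : Prop :=
  ∃ (α : Fin r → ℤ) (ρ : ℕ), (ρ = 0 ∨ ρ = 1) ∧ ∃ s : ℚ,
    ∀ a : Fin r → ℂ, (∀ j, a j ≠ 0) →
      mtheta q δ γ z t (fun j => a j * ((q : ℂ) ^ (α j)))
        = (-1 : ℂ) ^ ρ * (∏ j, a j ^ (-(w j))) * ((q ^ (-(s : ℝ)) : ℝ) : ℂ) * mtheta q δ γ z t a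

variable {q δ γ z t}

lemma mthetaArg_mul_zpow (a : Fin r → ℂ) {c : ℂ} (hc : c ≠ 0) (α : Fin r → ℤ) (i : Fin m) :
    mthetaArg q δ γ z (fun j => a j * c ^ α j) i = c ^ (α ⬝ᵥ γ i) * mthetaArg q δ γ z a i := by
  rw [mthetaArg, mthetaArg, prod_mul_zpow_zpow a hc]
  ring

lemma mthetaArg_ne_zero (hq0 : 0 < q) {a : Fin r → ℂ} (ha : ∀ j, a j ≠ 0) (i : Fin m) :
    mthetaArg q δ γ z a i ≠ 0 := by
  simp [mthetaArg, Finset.prod_eq_zero_iff, zpow_ne_zero, ha, (Real.rpow_pos_of_pos hq0 _).ne']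

lemma mtheta_mul_zpow_of_dotProduct_eq_zero (a : Fin r → ℂ) {c : ℂ} (hc : c ≠ 0)
    {β : Fin r → ℤ} (hβ : ∀ i, β ⬝ᵥ γ i = 0) :
    mtheta q δ γ z t (fun j => a j * c ^ β j) = mtheta q δ γ z t a := by
  simp only [mtheta_eq_prod_theta, mthetaArg_mul_zpow a hc, hβ, zpow_zero, one_mul]

lemma mtheta_mul_zpow_of_dotProduct_eq_nat_mul (hq0 : 0 < q) (hq1 : q < 1) (ht : ∀ i, 0 < t i)
    {k : Fin m} {α : Fin r → ℤ} {n : ℕ} (hαk : ((α ⬝ᵥ γ k : ℤ) : ℚ) = n * t k)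
    (hα : ∀ i ≠ k, α ⬝ᵥ γ i = 0) {a : Fin r → ℂ} (ha : ∀ j, a j ≠ 0) :
    mtheta q δ γ z t (fun j => a j * (q : ℂ) ^ α j)
      = (-(mthetaArg q δ γ z a k)⁻¹) ^ n * (((q ^ (t k : ℝ) : ℝ) : ℂ)⁻¹) ^ n.choose 2
        * mtheta q δ γ z t a := by
  classical
  have hQ : ‖((q ^ (t k : ℝ) : ℝ) : ℂ)‖ < 1 := by
    rw [Complex.norm_real, Real.norm_of_nonneg (by positivity)]
    exact Real.rpow_lt_one hq0.le hq1 (by exact_mod_cast ht k)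
  have hqk : (q : ℂ) ^ (α ⬝ᵥ γ k) = ((q ^ (t k : ℝ) : ℝ) : ℂ) ^ n := by
    have : ((α ⬝ᵥ γ k : ℤ) : ℝ) = t k * n := by rw [mul_comm]; exact_mod_cast hαk
    rw [← Complex.ofReal_zpow, ← Real.rpow_intCast, this, Real.rpow_mul_natCast hq0.le,
      Complex.ofReal_pow]
  set C := (-(mthetaArg q δ γ z a k)⁻¹) ^ n * (((q ^ (t k : ℝ) : ℝ) : ℂ)⁻¹) ^ n.choose 2
  have hfactor : ∀ i, theta (mthetaArg q δ γ z (fun j => a j * (q : ℂ) ^ α j) i)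
      ((q ^ (t i : ℝ) : ℝ) : ℂ) = (Pi.mulSingle k C : Fin m → ℂ) i
        * theta (mthetaArg q δ γ z a i) ((q ^ (t i : ℝ) : ℝ) : ℂ) := fun i => by
    rw [mthetaArg_mul_zpow a (by exact_mod_cast hq0.ne') α i]
    rcases eq_or_ne i k with rfl | hik
    · rw [hqk, theta_pow_mul hQ (by simp [(Real.rpow_pos_of_pos hq0 _).ne'])
        (mthetaArg_ne_zero hq0 ha i), Pi.mulSingle_eq_same]
    · rw [hα i hik, zpow_zero, one_mul, Pi.mulSingle_eq_of_ne hik, one_mul]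
  rw [mtheta_eq_prod_theta, Finset.prod_congr rfl fun i _ => hfactor i, Finset.prod_mul_distrib,
    Finset.prod_pi_mulSingle', if_pos (Finset.mem_univ k), mtheta_eq_prod_theta]

lemma hasContiguousRelation_nsmul (hq0 : 0 < q) (hq1 : q < 1) (ht : ∀ i, 0 < t i)
    {k : Fin m} {α : Fin r → ℤ} {n : ℕ} (hαk : ((α ⬝ᵥ γ k : ℤ) : ℚ) = n * t k)
    (hα : ∀ i ≠ k, α ⬝ᵥ γ i = 0) : HasContiguousRelation q δ γ z t (n • γ k) := by
  refine ⟨α, n * (1 + δ k) % 2, Nat.mod_two_eq_zero_or_one _, n * z k + n.choose 2 * t k,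
    fun a ha => ?_⟩
  rw [mtheta_mul_zpow_of_dotProduct_eq_nat_mul hq0 hq1 ht hαk hα ha]
  congr 1
  have hsign : (-1 : ℂ) ^ (n * (1 + δ k) % 2) = (-1) ^ n * ((-1) ^ δ k) ^ n := by
    rw [← neg_one_pow_eq_pow_mod_two, ← pow_mul, ← pow_add]
    ring_nf
  have hmonomial : ∏ j, a j ^ (-((n • γ k) j)) = (∏ j, a j ^ γ k j)⁻¹ ^ n := by
    simp only [Pi.smul_apply, nsmul_eq_mul, zpow_neg, zpow_mul', zpow_natCast,
      Finset.prod_inv_distrib, Finset.prod_pow, inv_pow]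
  have hqpow : ((q ^ (-((n * z k + n.choose 2 * t k : ℚ) : ℝ)) : ℝ) : ℂ)
      = ((q ^ (z k : ℝ) : ℝ) : ℂ)⁻¹ ^ n * ((q ^ (t k : ℝ) : ℝ) : ℂ)⁻¹ ^ n.choose 2 := by
    push_cast
    rw [Real.rpow_neg hq0.le, Real.rpow_add hq0, mul_comm (n : ℝ), mul_comm ((n.choose 2 : ℕ) : ℝ),
      Real.rpow_mul_natCast hq0.le, Real.rpow_mul_natCast hq0.le]
    push_cast
    ring
  rw [mthetaArg, hsign, hmonomial, hqpow, mul_inv, mul_inv, ← inv_pow, inv_neg_one]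
  ring

lemma exists_hasContiguousRelation_nsmul (hq0 : 0 < q) (hq1 : q < 1) (ht : ∀ i, 0 < t i)
    (hγ : LinearIndependent ℚ fun i j => (γ i j : ℚ)) (k : Fin m) :
    ∃ n : ℕ, 0 < n ∧ HasContiguousRelation q δ γ z t (n • γ k) := by
  classical
  obtain ⟨u, hu⟩ := hγ.exists_dotProduct_eq (Pi.single k (t k) : Fin m → ℚ)
  obtain ⟨n, hn, α, hα⟩ := exists_intCast_eq_nat_mul u
  have hαγ : ∀ i, ((α ⬝ᵥ γ i : ℤ) : ℚ) = n * (Pi.single k (t k) : Fin m → ℚ) i := fun i => by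
    rw [intCast_dotProduct_of_eq_nat_mul hα, dotProduct_comm, hu i]
  refine ⟨n, hn, hasContiguousRelation_nsmul hq0 hq1 ht (by simpa using hαγ k) fun i hik => ?_⟩
  exact_mod_cast (by simpa [hik] using hαγ i)

lemma exists_mtheta_ne_zero (hq0 : 0 < q) (hq1 : q < 1) (ht : ∀ i, 0 < t i)
    (hγ : LinearIndependent ℚ fun i j => (γ i j : ℚ)) :
    ∃ a : Fin r → ℂ, (∀ j, a j ≠ 0) ∧ mtheta q δ γ z t a ≠ 0 := by
  obtain ⟨u, hu⟩ := hγ.exists_dotProduct_eq fun i => 1 + δ i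
  refine ⟨fun j => exp (Real.pi * I * u j), fun j => exp_ne_zero _, ?_⟩
  have harg : ∀ i, mthetaArg q δ γ z (fun j => exp (Real.pi * I * u j)) i
      = -((q ^ (z i : ℝ) : ℝ) : ℂ) := fun i => by
    have hexponent : ∑ j, (γ i j : ℂ) * (Real.pi * I * u j) = (1 + δ i : ℕ) * (Real.pi * I) := by
      have := congrArg (fun x : ℚ => (x : ℂ)) (hu i)
      push_cast [dotProduct] at this
      push_cast
      rw [← this, Finset.sum_mul]
      exact Finset.sum_congr rfl fun j _ => by ring
    have hphase : ∏ j, exp (Real.pi * I * u j) ^ γ i j = (-1) ^ (1 + δ i) := by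
      simp_rw [← exp_int_mul]
      rw [← exp_sum, hexponent, exp_nat_mul, exp_pi_mul_I]
    rw [mthetaArg, hphase, ← pow_add, show δ i + (1 + δ i) = 2 * δ i + 1 by ring, pow_succ,
      pow_mul]
    simp
  rw [mtheta_eq_prod_theta, Finset.prod_ne_zero_iff]
  intro i _
  rw [harg]
  exact theta_neg_ofReal_ne_zero (Real.rpow_pos_of_pos hq0 _) (Real.rpow_nonneg hq0.le _)
    (Real.rpow_lt_one hq0.le hq1 (by exact_mod_cast ht i))

lemma mem_span_of_hasContiguousRelation (hq0 : 0 < q) (hq1 : q < 1) (ht : ∀ i, 0 < t i)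
    (hγ : LinearIndependent ℚ fun i j => (γ i j : ℚ)) {w : Fin r → ℤ}
    (hw : HasContiguousRelation q δ γ z t w) :
    (fun j => (w j : ℚ)) ∈ Submodule.span ℚ (Set.range fun i j => (γ i j : ℚ)) := by
  by_contra hspan
  obtain ⟨β, hβγ, hβw⟩ := exists_intVec_orthogonal_of_notMem_span hspan
  obtain ⟨α, ρ, -, s, hrel⟩ := hw
  obtain ⟨a, ha, hθ⟩ := exists_mtheta_ne_zero hq0 hq1 ht hγ (δ := δ) (z := z)
  have h2 : (2 : ℂ) ≠ 0 := two_ne_zero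
  have key := hrel (fun j => a j * 2 ^ β j) fun j => mul_ne_zero (ha j) (zpow_ne_zero _ h2)
  rw [show (fun j => a j * 2 ^ β j * (q : ℂ) ^ α j) = fun j => a j * (q : ℂ) ^ α j * 2 ^ β j by
      ext; ring, mtheta_mul_zpow_of_dotProduct_eq_zero (fun j => a j * (q : ℂ) ^ α j) h2 hβγ,
    mtheta_mul_zpow_of_dotProduct_eq_zero a h2 hβγ, hrel a ha, prod_mul_zpow_zpow a h2] at key
  have hne :
      (-1) ^ ρ * (∏ j, a j ^ (-w j)) * ((q ^ (-(s : ℝ)) : ℝ) : ℂ) * mtheta q δ γ z t a ≠ 0 := by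
    simp [Finset.prod_eq_zero_iff, zpow_ne_zero, ha, hθ, (Real.rpow_pos_of_pos hq0 _).ne']
  have hpow : (2 : ℂ) ^ (-(β ⬝ᵥ w)) = 1 := by
    rw [← dotProduct_neg]
    exact mul_left_cancel₀ hne (by linear_combination -key)
  rw [show (2 : ℂ) = ((2 : ℝ) : ℂ) by norm_num, ← ofReal_zpow, ofReal_eq_one,
    zpow_eq_one_iff_right₀ zero_le_two (by norm_num), neg_eq_zero] at hpow
  exact hβw hpow

end MultipleTheta

theorem span_factors_eq_span_contiguous_general (q : ℝ) (hq0 : 0 < q) (hq1 : q < 1)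
    (r m : ℕ)
    (δ : Fin m → ℕ)
    (γ : Fin m → Fin r → ℤ)
    (hγ : LinearIndependent ℚ (fun i => fun j => (γ i j : ℚ)))
    (z : Fin m → ℚ) (t : Fin m → ℚ) (ht : ∀ i, 0 < t i) :
    Submodule.span ℚ (Set.range (fun i => fun j => (γ i j : ℚ)))
      = Submodule.span ℚ {x : Fin r → ℚ | ∃ w : Fin r → ℤ,
          (∀ j, x j = (w j : ℚ)) ∧
          ∃ (α : Fin r → ℤ) (ρ : ℕ), (ρ = 0 ∨ ρ = 1) ∧ ∃ s : ℚ,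
            ∀ a : Fin r → ℂ, (∀ j, a j ≠ 0) →
              mtheta q δ γ z t (fun j => a j * ((q : ℂ) ^ (α j)))
                = (-1 : ℂ) ^ ρ * (∏ j, a j ^ (-(w j)))
                    * ((q ^ (-(s : ℝ)) : ℝ) : ℂ) * mtheta q δ γ z t a} := by
  apply le_antisymm <;> rw [Submodule.span_le]
  · rintro _ ⟨k, rfl⟩
    obtain ⟨n, hn, hrel⟩ := exists_hasContiguousRelation_nsmul (δ := δ) (z := z) hq0 hq1 ht hγ k
    have hγk : (fun j => (γ k j : ℚ)) = (n : ℚ)⁻¹ • fun j => ((n • γ k) j : ℚ) := by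
      ext j
      simp [hn.ne']
    beta_reduce
    rw [hγk]
    exact Submodule.smul_mem _ _ (Submodule.subset_span ⟨n • γ k, fun j => rfl, hrel⟩)
  · rintro x ⟨w, hxw, hrel⟩
    obtain rfl : x = fun j => (w j : ℚ) := funext hxw
    exact mem_span_of_hasContiguousRelation hq0 hq1 ht hγ hrel

/-- The span `U_θ` of the exponent vectors of the factors of a multiple theta
function equals the span `V_θ` of the exponent vectors of its contiguous
relations. -/
theorem span_factors_eq_span_contiguous (q : ℝ) (hq0 : 0 < q) (hq1 : q < 1)
    (r m : ℕ) (hm : 1 < m) (hmr : m ≤ r)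
    (δ : Fin m → ℕ) (hδ : ∀ i, δ i = 0 ∨ δ i = 1)
    (γ : Fin m → Fin r → ℤ)
    (hγ : LinearIndependent ℚ (fun i => fun j => (γ i j : ℚ)))
    (z : Fin m → ℚ) (t : Fin m → ℚ) (ht : ∀ i, 0 < t i) :
    Submodule.span ℚ (Set.range (fun i => fun j => (γ i j : ℚ)))
      = Submodule.span ℚ {x : Fin r → ℚ | ∃ w : Fin r → ℤ,
          (∀ j, x j = (w j : ℚ)) ∧
          ∃ (α : Fin r → ℤ) (ρ : ℕ), (ρ = 0 ∨ ρ = 1) ∧ ∃ s : ℚ,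
            ∀ a : Fin r → ℂ, (∀ j, a j ≠ 0) →
              mtheta q δ γ z t (fun j => a j * ((q : ℂ) ^ (α j)))
                = (-1 : ℂ) ^ ρ * (∏ j, a j ^ (-(w j)))
                    * ((q ^ (-(s : ℝ)) : ℝ) : ℂ) * mtheta q δ γ z t a} :=
  span_factors_eq_span_contiguous_general q hq0 hq1 r m δ γ hγ z t ht
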